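/- arXiv:2508.19345 — 4 statements merged into one kernel-verified Lean document; each statement's English description precedes it below -/
import Mathlib

section
/- Consider N battery units with time-varying states x_i : [0,∞) → ℝ running the dynamic average consensus estimator dx̂_{a,i}/dt = dx_i/dt − β Σ_{j=1}^N a_ij (x̂_{a,i}(t) − x̂_{a,j}(t)) with initialization x̂_{a,i}(0) = x_i(0). There exists a constant γ_s > 0, namely γ_s = sup_{τ≥0} ‖(I_N − (1/N) 1_N 1_N^T) ẋ(τ)‖ (assumed finite), such that for every β > 0 and every i, limsup_{t→∞} |x̂_{a,i}(t) − x_a(t)| ≤ γ_s/(β λ_2), where x_a(t) = (1/N) Σ_{j=1}^N x_j(t). -/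
/-!
Work with the error `e = x̂ - xₐ 𝟙`. Its coordinates sum to zero initially, and this is preserved
because `𝟙ᵀ L = 0`, so the Rayleigh bound `λ₂ ‖e‖² ≤ eᵀ L e` holds for all time. Since
`ė = (I - 𝟙𝟙ᵀ/N) ẋ - β L e`, the Lyapunov function `V = ‖e‖²` satisfies
`V̇ ≤ 2 γₛ ‖e‖ - 2 β λ₂ ‖e‖² ≤ -β λ₂ V + γₛ² / (β λ₂)`, hence `limsup V ≤ (γₛ / (β λ₂))²` by
comparison with the linear ODE, and `|eᵢ| ≤ ‖e‖`.
-/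

open Filter Matrix

noncomputable def eucNorm {ι : Type*} [Fintype ι] (v : ι → ℝ) : ℝ :=
  Real.sqrt (∑ i, v i ^ 2)

open scoped Topology

namespace SimpleGraph

variable {V R : Type*} [Fintype V] [DecidableEq V] (G : SimpleGraph V) [DecidableRel G.Adj]

theorem lapMatrix_mulVec_apply_eq_sum_adjMatrix_mul_sub [NonAssocRing R] (i : V) (v : V → R) :
    (G.lapMatrix R *ᵥ v) i = ∑ j, G.adjMatrix R i j * (v i - v j) := by
  rw [lapMatrix_mulVec_apply, ← card_neighborFinset_eq_degree, neighborFinset_eq_filter]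
  simp only [adjMatrix_apply, ite_mul, one_mul, zero_mul]
  rw [← Finset.sum_filter, Finset.sum_sub_distrib, Finset.sum_const, nsmul_eq_mul]

theorem sum_lapMatrix_mulVec [CommRing R] (v : V → R) : ∑ i, (G.lapMatrix R *ᵥ v) i = 0 := by
  rw [← one_dotProduct, dotProduct_mulVec, ← mulVec_transpose, G.isSymm_lapMatrix R]
  simp [Pi.one_def, lapMatrix_mulVec_const_eq_zero]

theorem lapMatrix_mulVec_sub_const [CommRing R] (v : V → R) (c : R) :
    G.lapMatrix R *ᵥ (fun i => v i - c) = G.lapMatrix R *ᵥ v := by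
  have hv : (fun i => v i - c) = v - c • fun _ => 1 := by ext; simp
  rw [hv, mulVec_sub, mulVec_smul, lapMatrix_mulVec_const_eq_zero, smul_zero, sub_zero]

end SimpleGraph

section EucNorm

variable {ι : Type*} [Fintype ι]

theorem sum_sub_average_eq_zero (v : ι → ℝ) :
    ∑ i, (v i - (∑ j, v j) / Fintype.card ι) = 0 := by
  rcases isEmpty_or_nonempty ι with hι | hι
  · simp
  · simp [Finset.sum_sub_distrib, mul_div_cancel₀]

theorem sq_eucNorm (v : ι → ℝ) : eucNorm v ^ 2 = ∑ i, v i ^ 2 :=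
  Real.sq_sqrt (Finset.sum_nonneg fun i _ => sq_nonneg (v i))

theorem abs_le_eucNorm (v : ι → ℝ) (i : ι) : |v i| ≤ eucNorm v :=
  Real.abs_le_sqrt (Finset.single_le_sum (f := fun j => v j ^ 2) (fun _ _ => sq_nonneg _)
    (Finset.mem_univ i))

theorem hasDerivAt_eucNorm_sq {e : ℝ → ι → ℝ} {e' : ι → ℝ} {t : ℝ}
    (he : ∀ i, HasDerivAt (fun s => e s i) (e' i) t) :
    HasDerivAt (fun s => eucNorm (e s) ^ 2) (2 * (e t ⬝ᵥ e')) t := by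
  simp only [sq_eucNorm, dotProduct, Finset.mul_sum]
  exact HasDerivAt.fun_sum fun i _ => ((he i).fun_pow 2).congr_deriv (by ring)

theorem two_mul_dotProduct_sub_smul_le {e g w : ι → ℝ} {β lam γ : ℝ} (hβ : 0 < β)
    (hlam : 0 < lam) (hg : eucNorm g ≤ γ) (hw : lam * eucNorm e ^ 2 ≤ e ⬝ᵥ w) :
    2 * (e ⬝ᵥ (g - β • w)) ≤ -(β * lam) * eucNorm e ^ 2 + γ ^ 2 / (β * lam) := by
  set k := β * lam
  have hk : 0 < k := mul_pos hβ hlam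
  have hcs : e ⬝ᵥ g ≤ eucNorm e * γ := (Real.sum_mul_le_sqrt_mul_sqrt _ e g).trans
    (mul_le_mul_of_nonneg_left hg (Real.sqrt_nonneg _))
  have hamgm : 2 * (eucNorm e * γ) ≤ k * eucNorm e ^ 2 + γ ^ 2 / k := by
    have hsq : k * eucNorm e ^ 2 + γ ^ 2 / k - 2 * (eucNorm e * γ) =
        (k * eucNorm e - γ) ^ 2 / k := by
      field_simp
      ring
    rw [← sub_nonneg, hsq]
    positivity
  have hβw : k * eucNorm e ^ 2 ≤ β * (e ⬝ᵥ w) := by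
    rw [mul_assoc]
    exact mul_le_mul_of_nonneg_left hw hβ.le
  rw [dotProduct_sub, dotProduct_smul, smul_eq_mul]
  linarith

end EucNorm

section Comparison

variable {V V' : ℝ → ℝ}

theorem eq_of_hasDerivAt_zero_of_nonneg (hV : ∀ t, 0 ≤ t → HasDerivAt V 0 t) {t : ℝ}
    (ht : 0 ≤ t) : V t = V 0 :=
  constant_of_has_deriv_right_zero (fun s hs => (hV s hs.1).continuousAt.continuousWithinAt)
    (fun s hs => (hV s hs.1).hasDerivWithinAt) t ⟨ht, le_rfl⟩

theorem le_exp_mul_add_of_hasDerivAt_le {k M : ℝ} (hk : k ≠ 0)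
    (hV : ∀ t, 0 ≤ t → HasDerivAt V (V' t) t) (hV' : ∀ t, 0 ≤ t → V' t ≤ -k * V t + M)
    {t : ℝ} (ht : 0 ≤ t) : V t ≤ Real.exp (-k * t) * (V 0 - M / k) + M / k := by
  set W : ℝ → ℝ := fun s => Real.exp (k * s) * (V s - M / k)
  have hW : ∀ s, 0 ≤ s → HasDerivAt W (Real.exp (k * s) * (V' s + k * V s - M)) s := by
    intro s hs
    refine ((((hasDerivAt_id' s).const_mul k).exp).fun_mul
      ((hV s hs).sub_const (M / k))).congr_deriv ?_
    field_simp
    ring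
  have hanti : AntitoneOn W (Set.Ici 0) := by
    refine antitoneOn_of_deriv_nonpos (convex_Ici 0)
      (fun s hs => (hW s hs).continuousAt.continuousWithinAt) ?_ ?_ <;> rw [interior_Ici]
    · exact fun s hs => (hW s hs.le).differentiableAt.differentiableWithinAt
    · intro s hs
      rw [(hW s hs.le).deriv]
      exact mul_nonpos_of_nonneg_of_nonpos (Real.exp_pos _).le (by linarith [hV' s hs.le])
  have hWt : W t ≤ W 0 := hanti Set.self_mem_Ici ht ht
  simp only [W, mul_zero, Real.exp_zero, one_mul] at hWt
  have hexp : Real.exp (-k * t) * Real.exp (k * t) = 1 := by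
    rw [← Real.exp_add]
    simp
  calc V t = Real.exp (-k * t) * (Real.exp (k * t) * (V t - M / k)) + M / k := by
        rw [← mul_assoc, hexp]
        ring
    _ ≤ Real.exp (-k * t) * (V 0 - M / k) + M / k := by gcongr

theorem eventually_le_of_hasDerivAt_le {k M c : ℝ} (hk : 0 < k)
    (hV : ∀ t, 0 ≤ t → HasDerivAt V (V' t) t) (hV' : ∀ t, 0 ≤ t → V' t ≤ -k * V t + M)
    (hc : M / k < c) : ∀ᶠ t in atTop, V t ≤ c := by
  have hdecay : Tendsto (fun t => Real.exp (-k * t) * (V 0 - M / k)) atTop (𝓝 0) := by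
    simpa using (Real.tendsto_exp_atBot.comp
      (tendsto_id.const_mul_atTop_of_neg (neg_neg_of_pos hk))).mul_const (V 0 - M / k)
  filter_upwards [hdecay.eventually_lt_const (sub_pos.2 hc), eventually_ge_atTop 0] with t hlt ht
  linarith [le_exp_mul_add_of_hasDerivAt_le hk.ne' hV hV' ht]

end Comparison

section Consensus

variable {V : Type*} [Fintype V] [DecidableEq V] {G : SimpleGraph V} [DecidableRel G.Adj]
  {e g : ℝ → V → ℝ} {β : ℝ}

theorem sum_eq_zero_of_hasDerivAt_sub_lapMatrix (hg : ∀ t, 0 ≤ t → ∑ i, g t i = 0)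
    (he0 : ∑ i, e 0 i = 0)
    (he : ∀ i t, 0 ≤ t → HasDerivAt (fun s => e s i) (g t i - β * (G.lapMatrix ℝ *ᵥ e t) i) t)
    {t : ℝ} (ht : 0 ≤ t) : ∑ i, e t i = 0 := by
  have hderiv : ∀ s, 0 ≤ s → HasDerivAt (fun s => ∑ i, e s i) 0 s := fun s hs =>
    (HasDerivAt.fun_sum fun i _ => he i s hs).congr_deriv (by
      rw [Finset.sum_sub_distrib, ← Finset.mul_sum, G.sum_lapMatrix_mulVec, hg s hs]
      ring)
  rw [eq_of_hasDerivAt_zero_of_nonneg hderiv ht, he0]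

theorem eventually_eucNorm_le_of_hasDerivAt_sub_lapMatrix {lam γ : ℝ} (hβ : 0 < β)
    (hlam : 0 < lam)
    (hmin : ∀ δ : V → ℝ, ∑ i, δ i = 0 → lam * ∑ i, δ i ^ 2 ≤ δ ⬝ᵥ G.lapMatrix ℝ *ᵥ δ)
    (hgγ : ∀ t, 0 ≤ t → eucNorm (g t) ≤ γ) (hg : ∀ t, 0 ≤ t → ∑ i, g t i = 0)
    (he0 : ∑ i, e 0 i = 0)
    (he : ∀ i t, 0 ≤ t → HasDerivAt (fun s => e s i) (g t i - β * (G.lapMatrix ℝ *ᵥ e t) i) t)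
    {ε : ℝ} (hε : 0 < ε) : ∀ᶠ t in atTop, eucNorm (e t) ≤ γ / (β * lam) + ε := by
  have hk : 0 < β * lam := mul_pos hβ hlam
  have hγ : 0 ≤ γ := (Real.sqrt_nonneg _).trans (hgγ 0 le_rfl)
  have hV : ∀ t, 0 ≤ t → HasDerivAt (fun s => eucNorm (e s) ^ 2)
      (2 * (e t ⬝ᵥ (g t - β • G.lapMatrix ℝ *ᵥ e t))) t :=
    fun t ht => hasDerivAt_eucNorm_sq (he · t ht)
  have hV' : ∀ t, 0 ≤ t → 2 * (e t ⬝ᵥ (g t - β • G.lapMatrix ℝ *ᵥ e t)) ≤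
      -(β * lam) * eucNorm (e t) ^ 2 + γ ^ 2 / (β * lam) := by
    intro t ht
    refine two_mul_dotProduct_sub_smul_le hβ hlam (hgγ t ht) ?_
    rw [sq_eucNorm]
    exact hmin _ (sum_eq_zero_of_hasDerivAt_sub_lapMatrix hg he0 he ht)
  have hc : γ ^ 2 / (β * lam) / (β * lam) < (γ / (β * lam) + ε) ^ 2 := by
    rw [div_div, ← sq, ← div_pow]
    gcongr
    exact lt_add_of_pos_right _ hε
  filter_upwards [eventually_le_of_hasDerivAt_le hk hV hV' hc] with t ht
  exact (pow_le_pow_iff_left₀ (Real.sqrt_nonneg _) (by positivity) two_ne_zero).1 ht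

end Consensus

theorem statement0_general
    (N : ℕ) (G : SimpleGraph (Fin N)) [DecidableRel G.Adj]
    (x xhat : ℝ → Fin N → ℝ)
    (hx : ∀ i, ContDiff ℝ 1 (fun t => x t i))
    (γs lam2 β : ℝ)
    -- γₛ is the supremum over τ ≥ 0 of ‖(I_N − (1/N) 1_N 1_Nᵀ) ẋ(τ)‖, assumed finite
    (hγ : IsLUB ((fun τ : ℝ => eucNorm (fun i =>
        deriv (fun s => x s i) τ - (∑ j, deriv (fun s => x s j) τ) / (N : ℝ))) ''
        Set.Ici (0 : ℝ)) γs)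
    -- lam2 is the second smallest eigenvalue of the Laplacian: it is a positive
    -- eigenvalue attained on the orthogonal complement of 1_N, and is the optimal
    -- Rayleigh-quotient bound there
    (hlampos : 0 < lam2)
    (hlammin : ∀ δ : Fin N → ℝ, (∑ i, δ i) = 0 →
        lam2 * (∑ i, δ i ^ 2) ≤ δ ⬝ᵥ (G.lapMatrix ℝ).mulVec δ)
    (hβ : 0 < β)
    -- the dynamic average consensus estimator dynamics
    (hdyn : ∀ i, ∀ t : ℝ, 0 ≤ t → HasDerivAt (fun s => xhat s i)
        (deriv (fun s => x s i) t
          - β * ∑ j, (G.adjMatrix ℝ) i j * (xhat t i - xhat t j)) t)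
    (hinit : ∀ i, xhat 0 i = x 0 i) :
    -- limsup_{t→∞} |x̂ₐᵢ(t) − xₐ(t)| ≤ γₛ/(β lam2)
    ∀ i, ∀ ε > 0, ∀ᶠ t in atTop,
      |xhat t i - (∑ j, x t j) / (N : ℝ)| ≤ γs / (β * lam2) + ε := by
  intro i ε hε
  set e : ℝ → Fin N → ℝ := fun t j => xhat t j - (∑ l, x t l) / (N : ℝ) with he_def
  have hxd : ∀ j t, HasDerivAt (fun s => x s j) (deriv (fun s => x s j) t) t :=
    fun j t => ((hx j).differentiable one_ne_zero t).hasDerivAt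
  have he : ∀ j t, 0 ≤ t → HasDerivAt (fun s => e s j) (deriv (fun s => x s j) t -
      (∑ l, deriv (fun s => x s l) t) / (N : ℝ) - β * (G.lapMatrix ℝ *ᵥ e t) j) t := by
    intro j t ht
    refine ((hdyn j t ht).sub
      ((HasDerivAt.fun_sum fun l _ => hxd l t).div_const (N : ℝ))).congr_deriv ?_
    rw [he_def, G.lapMatrix_mulVec_sub_const, G.lapMatrix_mulVec_apply_eq_sum_adjMatrix_mul_sub]
    ring
  have hg_sum : ∀ t, 0 ≤ t → ∑ j, (deriv (fun s => x s j) t -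
      (∑ l, deriv (fun s => x s l) t) / (N : ℝ)) = 0 := fun t _ => by
    simpa using sum_sub_average_eq_zero fun j => deriv (fun s => x s j) t
  have he0 : ∑ j, e 0 j = 0 := by
    simpa [e, hinit] using sum_sub_average_eq_zero (x 0)
  filter_upwards [eventually_eucNorm_le_of_hasDerivAt_sub_lapMatrix hβ hlampos hlammin
    (fun t ht => hγ.1 ⟨t, ht, rfl⟩) hg_sum he0 he hε] with t ht
  exact (abs_le_eucNorm (e t) i).trans ht

/-- convergence of the dynamic average consensus estimator
`dx̂ₐᵢ/dt = ẋᵢ − β Σⱼ aᵢⱼ (x̂ₐᵢ − x̂ₐⱼ)`, `x̂ₐᵢ(0) = xᵢ(0)`, to a neighborhood of the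
average unit state `xₐ(t) = (1/N) Σⱼ xⱼ(t)` of radius `γₛ/(β lam2)`, where
`γₛ = sup_{τ ≥ 0} ‖(I − (1/N)𝟙𝟙ᵀ) ẋ(τ)‖` (assumed finite) and `lam2` is the second
smallest eigenvalue of the Laplacian of the undirected connected communication graph. -/
theorem statement0
    (N : ℕ) (G : SimpleGraph (Fin N)) [DecidableRel G.Adj] (hG : G.Connected)
    (x xhat : ℝ → Fin N → ℝ)
    (hx : ∀ i, ContDiff ℝ 1 (fun t => x t i))
    (γs lam2 β : ℝ)
    -- γₛ is the supremum over τ ≥ 0 of ‖(I_N − (1/N) 1_N 1_Nᵀ) ẋ(τ)‖, assumed finite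
    (hγ : IsLUB ((fun τ : ℝ => eucNorm (fun i =>
        deriv (fun s => x s i) τ - (∑ j, deriv (fun s => x s j) τ) / (N : ℝ))) ''
        Set.Ici (0 : ℝ)) γs)
    (hγpos : 0 < γs)
    -- lam2 is the second smallest eigenvalue of the Laplacian: it is a positive
    -- eigenvalue attained on the orthogonal complement of 1_N, and is the optimal
    -- Rayleigh-quotient bound there
    (hlampos : 0 < lam2)
    (hlameig : ∃ v : Fin N → ℝ, v ≠ 0 ∧ (∑ i, v i) = 0 ∧
        (G.lapMatrix ℝ).mulVec v = lam2 • v)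
    (hlammin : ∀ δ : Fin N → ℝ, (∑ i, δ i) = 0 →
        lam2 * (∑ i, δ i ^ 2) ≤ δ ⬝ᵥ (G.lapMatrix ℝ).mulVec δ)
    (hβ : 0 < β)
    -- the dynamic average consensus estimator dynamics
    (hdyn : ∀ i, ∀ t : ℝ, 0 ≤ t → HasDerivAt (fun s => xhat s i)
        (deriv (fun s => x s i) t
          - β * ∑ j, (G.adjMatrix ℝ) i j * (xhat t i - xhat t j)) t)
    (hinit : ∀ i, xhat 0 i = x 0 i) :
    -- limsup_{t→∞} |x̂ₐᵢ(t) − xₐ(t)| ≤ γₛ/(β lam2)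
    ∀ i, ∀ ε > 0, ∀ᶠ t in atTop,
      |xhat t i - (∑ j, x t j) / (N : ℝ)| ≤ γs / (β * lam2) + ε :=
  statement0_general N G x xhat hx γs lam2 β hγ hlampos hlammin hβ hdyn hinit
end

section
/- Consider the leader-following estimator dp̂_{a,i}/dt = −κ( Σ_{j=1}^N a_ij (p̂_{a,i}(t) − p̂_{a,j}(t)) + b_i (p̂_{a,i}(t) − p_a(t)) ), p̂_{a,i}(0) = 0, where b_i ∈ {0,1} with b_i = 1 for at least one i, and the reference signal p_a : [0,∞) → ℝ is continuously differentiable with |ṗ_a(t)| ≤ ψ/N for all t. Then there exists a constant γ_p > 0, independent of κ, such that for every κ > 0 and every i, limsup_{t→∞} |p̂_{a,i}(t) − p_a(t)| ≤ ψ γ_p / κ. -/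
/-!
The tracking error `e = p̂ - pₐ 𝟙` obeys `ė = -κ (L + diag b) e - ṗₐ 𝟙`, with `L` the graph
Laplacian. Because `G` is connected and some agent is pinned to the leader, `L + diag b` is
positive definite, so `eᵀ (L + diag b) e ≥ c |e|²` for some `c > 0` depending only on `G` and `b`.
For `V = |e|²`, Young's inequality on the disturbance term gives `V̇ ≤ -κ c V + ψ² / (N κ c)`, and
Grönwall's inequality yields `limsup V ≤ ψ² / (N κ² c²)`, i.e. the claim with `γₚ = 1 / (√N c)`.
-/

open Filter Matrix Topology Finset

theorem exists_pos_mul_norm_sq_le_of_homogeneous {E : Type*} [NormedAddCommGroup E]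
    [NormedSpace ℝ E] [FiniteDimensional ℝ E] {q : E → ℝ} (hq : Continuous q)
    (hsmul : ∀ (c : ℝ) x, q (c • x) = c ^ 2 * q x) (hpos : ∀ x, x ≠ 0 → 0 < q x) :
    ∃ c > 0, ∀ x, c * ‖x‖ ^ 2 ≤ q x := by
  rcases subsingleton_or_nontrivial E with hE | hE
  · exact ⟨1, one_pos, fun x => by simpa [Subsingleton.elim x 0] using (hsmul 0 0).ge⟩
  obtain ⟨u, hu, hmin⟩ := (isCompact_sphere (0 : E) 1).exists_isMinOn
    (NormedSpace.sphere_nonempty.2 zero_le_one) hq.continuousOn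
  have hu0 : u ≠ 0 := ne_zero_of_mem_unit_sphere ⟨u, hu⟩
  refine ⟨q u, hpos u hu0, fun x => ?_⟩
  rcases eq_or_ne x 0 with rfl | hx
  · simpa using (hsmul 0 0).ge
  have hx' : ‖x‖ ≠ 0 := norm_ne_zero_iff.2 hx
  have hunit : ‖x‖⁻¹ • x ∈ Metric.sphere (0 : E) 1 := by
    simp [norm_smul, hx']
  calc q u * ‖x‖ ^ 2 ≤ q (‖x‖⁻¹ • x) * ‖x‖ ^ 2 := by gcongr; exact hmin hunit
    _ = q x := by rw [hsmul]; field_simp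

theorem Matrix.PosDef.exists_pos_mul_dotProduct_self_le {n : Type*} [Fintype n]
    {M : Matrix n n ℝ} (hM : M.PosDef) : ∃ c > 0, ∀ x, c * (x ⬝ᵥ x) ≤ x ⬝ᵥ M *ᵥ x := by
  obtain ⟨c, hc, hle⟩ := exists_pos_mul_norm_sq_le_of_homogeneous
    (q := fun y : EuclideanSpace ℝ n => y.ofLp ⬝ᵥ M *ᵥ y.ofLp) (by fun_prop)
    (fun c y => by simp only [WithLp.ofLp_smul, mulVec_smul, dotProduct_smul, smul_dotProduct,
      smul_eq_mul]; ring)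
    (fun y hy => by simpa using hM.dotProduct_mulVec_pos (x := y.ofLp) (by simpa using hy))
  refine ⟨c, hc, fun x => ?_⟩
  have hx := hle (WithLp.toLp 2 x)
  rw [EuclideanSpace.real_norm_sq_eq] at hx
  simpa [dotProduct, sq] using hx

theorem SimpleGraph.posDef_lapMatrix_add_diagonal {V : Type*} [Fintype V] [DecidableEq V]
    (G : SimpleGraph V) [DecidableRel G.Adj] (hG : G.Connected) {b : V → ℝ} (hb : 0 ≤ b)
    {i : V} (hi : 0 < b i) : (G.lapMatrix ℝ + diagonal b).PosDef := by
  refine .of_dotProduct_mulVec_pos ((G.isHermitian_lapMatrix ℝ).add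
    (isHermitian_diagonal b)) fun x hx => ?_
  rw [star_trivial, add_mulVec, dotProduct_add]
  have hL : 0 ≤ x ⬝ᵥ G.lapMatrix ℝ *ᵥ x := by
    simpa using (G.posSemidef_lapMatrix ℝ).dotProduct_mulVec_nonneg x
  have hD : x ⬝ᵥ diagonal b *ᵥ x = ∑ j, b j * x j ^ 2 := by
    simp only [mulVec_diagonal, dotProduct]; exact sum_congr rfl fun j _ => by ring
  have hD0 : ∀ j ∈ univ, 0 ≤ b j * x j ^ 2 := fun j _ => mul_nonneg (hb j) (sq_nonneg _)
  by_contra! hle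
  have hL0 : x ⬝ᵥ G.lapMatrix ℝ *ᵥ x = 0 := by linarith [sum_nonneg hD0]
  have hconst : ∀ j, x j = x i := fun j =>
    ((G.lapMatrix_toLinearMap₂'_apply'_eq_zero_iff_forall_reachable x).1
      (by simpa [toLinearMap₂'_apply'] using hL0)) j i (hG.preconnected j i)
  have hxi : b i * x i ^ 2 = 0 :=
    (sum_eq_zero_iff_of_nonneg hD0).1 (by linarith [sum_nonneg hD0]) i (mem_univ i)
  exact hx (funext fun j => by simpa [hconst j, hi.ne'] using hxi)

theorem SimpleGraph.lapMatrix_mulVec_apply_eq_sum {V R : Type*} [Fintype V] [DecidableEq V]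
    [NonAssocRing R] (G : SimpleGraph V) [DecidableRel G.Adj] (x : V → R) (i : V) :
    (G.lapMatrix R *ᵥ x) i = ∑ j, G.adjMatrix R i j * (x i - x j) := by
  rw [lapMatrix, sub_mulVec, Pi.sub_apply, degMatrix_mulVec_apply, degree_eq_sum_if_adj]
  simp only [sum_mul, mulVec, dotProduct, mul_sub, sum_sub_distrib, adjMatrix_apply, ite_mul,
    one_mul, zero_mul]

theorem tendsto_gronwallBound_of_neg {δ K ε : ℝ} (hK : K < 0) :
    Tendsto (gronwallBound δ K ε) atTop (𝓝 (-ε / K)) := by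
  have hexp : Tendsto (fun t => Real.exp (K * t)) atTop (𝓝 0) :=
    Real.tendsto_exp_atBot.comp ((tendsto_const_mul_atBot_of_neg hK).2 tendsto_id)
  rw [gronwallBound_of_K_ne_0 hK.ne]
  convert (hexp.const_mul δ).add ((hexp.sub_const 1).const_mul (ε / K)) using 2
  ring

theorem eventually_le_of_hasDerivAt_le_neg_mul_add {V V' : ℝ → ℝ} {a b : ℝ} (ha : 0 < a)
    (hV : ∀ t, 0 ≤ t → HasDerivAt V (V' t) t) (hV' : ∀ t, 0 ≤ t → V' t ≤ -a * V t + b)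
    {δ : ℝ} (hδ : 0 < δ) : ∀ᶠ t in atTop, V t ≤ b / a + δ := by
  have hgronwall : ∀ t, 0 ≤ t → V t ≤ gronwallBound (V 0) (-a) b t := fun T hT => by
    simpa using le_gronwallBound_of_liminf_deriv_right_le (f := V) (a := 0) (b := T)
      (fun t ht => (hV t ht.1).continuousAt.continuousWithinAt)
      (fun t ht r hr => (hV t ht.1).hasDerivWithinAt.liminf_right_slope_le hr) le_rfl
      (fun t ht => by linarith [hV' t ht.1]) T (Set.right_mem_Icc.2 hT)
  have hlim := tendsto_gronwallBound_of_neg (δ := V 0) (ε := b) (neg_lt_zero.2 ha)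
  rw [neg_div_neg_eq] at hlim
  filter_upwards [hlim.eventually (eventually_le_nhds (lt_add_of_pos_right _ hδ)),
    eventually_ge_atTop 0] with t hbound ht
  exact (hgronwall t ht).trans hbound

section

variable {n : Type*} [Fintype n]

theorem hasDerivAt_dotProduct_self {e : ℝ → n → ℝ} {e' : n → ℝ} {t : ℝ}
    (he : ∀ i, HasDerivAt (fun s => e s i) (e' i) t) :
    HasDerivAt (fun s => e s ⬝ᵥ e s) (2 * (e t ⬝ᵥ e')) t := by
  simp only [dotProduct, mul_sum]
  exact (HasDerivAt.fun_sum fun i _ => (he i).mul (he i)).congr_deriv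
    (sum_congr rfl fun i _ => by ring)

theorem two_mul_sum_le_mul_dotProduct_self_add (x : n → ℝ) (d : ℝ) {a : ℝ} (ha : 0 < a) :
    2 * d * ∑ i, x i ≤ a * (x ⬝ᵥ x) + Fintype.card n * (d ^ 2 / a) := by
  have hterm : ∀ i, 2 * d * x i ≤ a * (x i * x i) + d ^ 2 / a := fun i => by
    rw [← sub_nonneg]
    have : a * (x i * x i) + d ^ 2 / a - 2 * d * x i = (a * x i - d) ^ 2 / a := by
      field_simp; ring
    rw [this]; positivity
  simpa [dotProduct, mul_sum, sum_add_distrib] using sum_le_sum fun i (_ : i ∈ univ) => hterm i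

theorem eventually_dotProduct_self_le {M : Matrix n n ℝ} {c κ D : ℝ} (hc : 0 < c) (hκ : 0 < κ)
    (hM : ∀ x, c * (x ⬝ᵥ x) ≤ x ⬝ᵥ M *ᵥ x) {e : ℝ → n → ℝ} {d : ℝ → ℝ}
    (he : ∀ i t, 0 ≤ t → HasDerivAt (fun s => e s i) (-κ * (M *ᵥ e t) i - d t) t)
    (hd : ∀ t, 0 ≤ t → |d t| ≤ D) {δ : ℝ} (hδ : 0 < δ) :
    ∀ᶠ t in atTop, e t ⬝ᵥ e t ≤ Fintype.card n * D ^ 2 / (κ * c) ^ 2 + δ := by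
  have hκc : 0 < κ * c := mul_pos hκ hc
  have hdot : ∀ t, e t ⬝ᵥ (fun i => -κ * (M *ᵥ e t) i - d t)
      = -κ * (e t ⬝ᵥ M *ᵥ e t) - d t * ∑ i, e t i := fun t => by
    simp only [dotProduct, mul_sub, sum_sub_distrib, mul_sum]
    congr 1 <;> exact sum_congr rfl fun i _ => by ring
  have hbound : ∀ t, 0 ≤ t → 2 * (e t ⬝ᵥ fun i => -κ * (M *ᵥ e t) i - d t)
      ≤ -(κ * c) * (e t ⬝ᵥ e t) + Fintype.card n * (D ^ 2 / (κ * c)) := fun t ht => by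
    have hd2 : d t ^ 2 ≤ D ^ 2 := sq_le_sq' (abs_le.1 (hd t ht)).1 (abs_le.1 (hd t ht)).2
    have hyoung := two_mul_sum_le_mul_dotProduct_self_add (e t) (-d t) hκc
    rw [neg_sq] at hyoung
    have hcoer := mul_le_mul_of_nonneg_left (hM (e t)) hκ.le
    have hD : Fintype.card n * (d t ^ 2 / (κ * c)) ≤ Fintype.card n * (D ^ 2 / (κ * c)) := by
      gcongr
    rw [hdot]
    linarith
  convert eventually_le_of_hasDerivAt_le_neg_mul_add hκc
    (fun t ht => hasDerivAt_dotProduct_self fun i => he i t ht) hbound hδ using 3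
  field_simp

theorem abs_apply_le_of_dotProduct_self_le {x : n → ℝ} {m ε : ℝ} (hm : 0 ≤ m) (hε : 0 ≤ ε)
    (hx : x ⬝ᵥ x ≤ m ^ 2 + ε ^ 2) (i : n) : |x i| ≤ m + ε := by
  have hi : x i ^ 2 ≤ x ⬝ᵥ x := by
    simpa [dotProduct, sq] using single_le_sum (f := fun j => x j ^ 2)
      (fun j _ => sq_nonneg _) (mem_univ i)
  exact abs_le_of_sq_le_sq (by nlinarith [mul_nonneg hm hε]) (by positivity)

end

/-- convergence of the leader-following average desired power estimator
`dp̂ₐᵢ/dt = −κ(Σⱼ aᵢⱼ (p̂ₐᵢ − p̂ₐⱼ) + bᵢ(p̂ₐᵢ − pₐ))`, `p̂ₐᵢ(0) = 0`: there is a constant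
`γₚ > 0`, independent of `κ`, such that for every `κ > 0` and every `i`,
`limsup_{t→∞} |p̂ₐᵢ(t) − pₐ(t)| ≤ ψ γₚ / κ`. -/
theorem statement1
    (N : ℕ) (G : SimpleGraph (Fin N)) [DecidableRel G.Adj] (hG : G.Connected)
    (b : Fin N → ℝ) (hb : ∀ i, b i = 0 ∨ b i = 1) (hb1 : ∃ i, b i = 1)
    (pa : ℝ → ℝ) (hpa : ContDiff ℝ 1 pa)
    (ψ : ℝ) (hψ : 0 < ψ)
    (hpa' : ∀ t : ℝ, 0 ≤ t → |deriv pa t| ≤ ψ / (N : ℝ)) :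
    ∃ γp > (0 : ℝ), ∀ κ > (0 : ℝ), ∀ phat : ℝ → Fin N → ℝ,
      -- the leader-following estimator dynamics
      (∀ i, ∀ t : ℝ, 0 ≤ t → HasDerivAt (fun s => phat s i)
        (-κ * ((∑ j, (G.adjMatrix ℝ) i j * (phat t i - phat t j))
          + b i * (phat t i - pa t))) t) →
      (∀ i, phat 0 i = 0) →
      -- limsup_{t→∞} |p̂ₐᵢ(t) − pₐ(t)| ≤ ψ γₚ / κ
      ∀ i, ∀ ε > (0 : ℝ), ∀ᶠ t in atTop, |phat t i - pa t| ≤ ψ * γp / κ + ε := by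
  obtain ⟨i₀, hi₀⟩ := hb1
  have hb0 : 0 ≤ b := fun i => by rcases hb i with h | h <;> simp [h]
  obtain ⟨c, hc, hcoer⟩ := (G.posDef_lapMatrix_add_diagonal hG hb0
    (hi₀ ▸ one_pos : 0 < b i₀)).exists_pos_mul_dotProduct_self_le
  have hN : (0 : ℝ) < N := by exact_mod_cast i₀.pos
  refine ⟨1 / (√N * c), by positivity, fun κ hκ phat hphat _ i ε hε => ?_⟩
  have herr : ∀ i t, 0 ≤ t → HasDerivAt (fun s => phat s i - pa s)
      (-κ * ((G.lapMatrix ℝ + diagonal b) *ᵥ fun j => phat t j - pa t) i - deriv pa t) t :=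
    fun i t ht => by
      refine ((hphat i t ht).sub (hpa.differentiable one_ne_zero t).hasDerivAt).congr_deriv ?_
      simp only [add_mulVec, Pi.add_apply, G.lapMatrix_mulVec_apply_eq_sum, mulVec_diagonal,
        sub_sub_sub_cancel_right]
  have hlimit : (Fintype.card (Fin N) : ℝ) * (ψ / N) ^ 2 / (κ * c) ^ 2
      = (ψ * (1 / (√N * c)) / κ) ^ 2 := by
    rw [Fintype.card_fin]
    field_simp
    rw [Real.sq_sqrt hN.le]
  filter_upwards [eventually_dotProduct_self_le hc hκ hcoer herr hpa' (pow_pos hε 2)]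
    with t ht
  exact abs_apply_le_of_dotProduct_self_le (x := fun j => phat t j - pa t) (by positivity) hε.le
    (hlimit ▸ ht) i
end

section
/- Let L be the Laplacian matrix of an undirected connected graph on N vertices and let B = diag(b_1,…,b_N) with b_i ≥ 0 for all i and b_i > 0 for at least one i. Then the symmetric matrix L + B is positive definite. -/
/-!
Both `L` and `B` are positive semidefinite, so `xᵀ(L + B)x = 0` forces `Lx = 0` and `Bx = 0`.
On a connected graph `Lx = 0` means `x` is constant, and `Bx = 0` makes `x` vanish at a vertex
with `b_j > 0`; hence `x = 0`.
-/

open Matrix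

open scoped ComplexOrder in
theorem Matrix.PosSemidef.dotProduct_add_mulVec_eq_zero_iff {n 𝕜 : Type*} [Fintype n] [RCLike 𝕜]
    {A B : Matrix n n 𝕜} (hA : A.PosSemidef) (hB : B.PosSemidef) (x : n → 𝕜) :
    star x ⬝ᵥ (A + B) *ᵥ x = 0 ↔ A *ᵥ x = 0 ∧ B *ᵥ x = 0 := by
  rw [add_mulVec, dotProduct_add,
    add_eq_zero_iff_of_nonneg (hA.dotProduct_mulVec_nonneg x) (hB.dotProduct_mulVec_nonneg x),
    hA.dotProduct_mulVec_zero_iff, hB.dotProduct_mulVec_zero_iff]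

theorem Matrix.PosSemidef.posDef_of_dotProduct_mulVec_eq_zero {n R : Type*} [Fintype n]
    [CommRing R] [PartialOrder R] [StarRing R] {M : Matrix n n R} (hM : M.PosSemidef)
    (h : ∀ x, star x ⬝ᵥ M *ᵥ x = 0 → x = 0) : M.PosDef :=
  .of_dotProduct_mulVec_pos hM.isHermitian fun x hx =>
    (hM.dotProduct_mulVec_nonneg x).lt_of_ne' (mt (h x) hx)

theorem SimpleGraph.Connected.eq_zero_of_lapMatrix_mulVec_eq_zero {V : Type*} [Fintype V]
    [DecidableEq V] {G : SimpleGraph V} [DecidableRel G.Adj] (hG : G.Connected) {x : V → ℝ}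
    (hx : G.lapMatrix ℝ *ᵥ x = 0) {j : V} (hj : x j = 0) : x = 0 := by
  funext i
  rw [(G.lapMatrix_mulVec_eq_zero_iff_forall_reachable).1 hx i j (hG i j), hj, Pi.zero_apply]

/-- for the Laplacian `L` of an undirected connected graph and a nonnegative
diagonal matrix `B = diag(b)` with at least one positive entry, `L + B` is positive definite. -/
theorem statement2
    (N : ℕ) (G : SimpleGraph (Fin N)) [DecidableRel G.Adj] (hG : G.Connected)
    (b : Fin N → ℝ) (hb : ∀ i, 0 ≤ b i) (hb1 : ∃ i, 0 < b i) :
    (G.lapMatrix ℝ + Matrix.diagonal b).PosDef := by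
  obtain ⟨j, hj⟩ := hb1
  have hL := G.posSemidef_lapMatrix ℝ
  have hB : (diagonal b).PosSemidef := .diagonal hb
  refine (hL.add hB).posDef_of_dotProduct_mulVec_eq_zero fun x hx => ?_
  obtain ⟨hLx, hBx⟩ := (hL.dotProduct_add_mulVec_eq_zero_iff hB x).1 hx
  have hbx : b j * x j = 0 := by simpa [mulVec_diagonal] using congrFun hBx j
  exact hG.eq_zero_of_lapMatrix_mulVec_eq_zero hLx ((mul_eq_zero.1 hbx).resolve_left hj.ne')
end

section
/- Let L ∈ ℝ^{N×N} be the Laplacian of an undirected connected graph (so L is symmetric positive semidefinite and its kernel is the span of 1_N). Define the block matrix L' = [[L + I_N, −I_N], [−I_N, I_N]] ∈ ℝ^{2N×2N}. Then L' is symmetric, positive semidefinite, satisfies L' 1_{2N} = 0, and its kernel is exactly the span of 1_{2N}; consequently its second smallest eigenvalue λ_2' is strictly positive. -/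
/-!
Write a vector on the two copies of the vertex set as `(x, y)`. The quadratic form of `L'` is
`xᵀ L x + ‖x - y‖²`, so `L'` is positive semidefinite, and `L' (x, y) = 0` forces `y = x` and
`L x = 0`, i.e. `(x, y)` is constant because `G` is connected. A positive semidefinite operator is
positive definite on the orthogonal complement of its kernel, here `{δ | ∑ δ = 0}`, and the
minimum of its Rayleigh quotient there is the eigenvalue `λ₂' > 0`.
-/

open Matrix
open scoped InnerProductSpace

namespace LinearMap.IsPositive

variable {E : Type*} [NormedAddCommGroup E] [InnerProductSpace ℝ E] [FiniteDimensional ℝ E]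
  {T : E →ₗ[ℝ] E}

theorem exists_pos_hasEigenvalue_le_inner [Nontrivial E] (hT : T.IsPositive)
    (hker : ker T = ⊥) :
    ∃ μ > 0, Module.End.HasEigenvalue T μ ∧ ∀ x, μ * ‖x‖ ^ 2 ≤ ⟪T x, x⟫_ℝ := by
  set μ : ℝ := ⨅ x : { x : E // x ≠ 0 }, RCLike.re ⟪T x, x⟫_ℝ / ‖(x : E)‖ ^ 2
  have : Nonempty { x : E // x ≠ 0 } := nonempty_subtype.2 (exists_ne 0)
  have hrayleigh_nonneg (x : { x : E // x ≠ 0 }) :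
      0 ≤ RCLike.re ⟪T x, x⟫_ℝ / ‖(x : E)‖ ^ 2 :=
    div_nonneg (hT.re_inner_nonneg_left x) (sq_nonneg _)
  have hμ : Module.End.HasEigenvalue T μ := hT.isSymmetric.hasEigenvalue_iInf_of_finiteDimensional
  refine ⟨μ, ?_, hμ, fun x => ?_⟩
  · obtain ⟨v, hv⟩ := hμ.exists_hasEigenvector
    refine (le_ciInf hrayleigh_nonneg).lt_of_ne fun h0 => hv.2 ?_
    rw [← Submodule.mem_bot ℝ, ← hker, LinearMap.mem_ker, hv.apply_eq_smul,
      show μ = 0 from h0.symm, zero_smul]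
  · rcases eq_or_ne x 0 with rfl | hx
    · simp
    have hle := ciInf_le ⟨0, Set.forall_mem_range.2 hrayleigh_nonneg⟩
      (⟨x, hx⟩ : { x : E // x ≠ 0 })
    exact (le_div_iff₀ (by positivity)).1 hle

theorem exists_pos_eigenvector_orthogonal_ker (hT : T.IsPositive) (hT0 : T ≠ 0) :
    ∃ μ > 0, (∃ v ∈ (ker T)ᗮ, v ≠ 0 ∧ T v = μ • v) ∧
      ∀ x ∈ (ker T)ᗮ, μ * ‖x‖ ^ 2 ≤ ⟪T x, x⟫_ℝ := by
  have hW : ∀ v ∈ (ker T)ᗮ, T v ∈ (ker T)ᗮ := by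
    simpa only [Module.End.eigenspace_zero] using
      hT.isSymmetric.invariant_orthogonalComplement_eigenspace 0
  have : Nontrivial (ker T)ᗮ := by
    rw [Submodule.nontrivial_iff_ne_bot, Ne, Submodule.orthogonal_eq_bot_iff, LinearMap.ker_eq_top]
    exact hT0
  have hS : (T.restrict hW).IsPositive :=
    ⟨hT.isSymmetric.restrict_invariant hW, fun x => hT.re_inner_nonneg_left x⟩
  have hSker : ker (T.restrict hW) = ⊥ := by
    rw [LinearMap.ker_eq_bot']
    intro x hx
    have hxker : (x : E) ∈ ker T := congrArg Subtype.val hx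
    exact Subtype.ext (Submodule.disjoint_def.1 (Submodule.orthogonal_disjoint _) _ hxker x.2)
  obtain ⟨μ, hμ, heig, hgap⟩ := hS.exists_pos_hasEigenvalue_le_inner hSker
  obtain ⟨v, hv⟩ := heig.exists_hasEigenvector
  refine ⟨μ, hμ, ⟨v, v.2, fun h => hv.2 (Subtype.ext h), congrArg Subtype.val hv.apply_eq_smul⟩,
    fun x hx => hgap ⟨x, hx⟩⟩

end LinearMap.IsPositive

namespace Matrix

section SpectralGap

variable {ι : Type*} [Fintype ι] [DecidableEq ι] {M : Matrix ι ι ℝ}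

theorem mem_orthogonal_ker_toEuclideanLin_iff_sum_eq_zero
    (hker : ∀ v : ι → ℝ, M *ᵥ v = 0 ↔ ∃ c : ℝ, v = fun _ => c) (x : EuclideanSpace ℝ ι) :
    x ∈ (LinearMap.ker (toEuclideanLin M))ᗮ ↔ ∑ i, x i = 0 := by
  have hinner (c : ℝ) : ⟪WithLp.toLp 2 (fun _ : ι => c), x⟫_ℝ = c * ∑ i, x i := by
    simp [EuclideanSpace.inner_eq_star_dotProduct, dotProduct, Finset.mul_sum, mul_comm]
  have hmem (c : ℝ) : WithLp.toLp 2 (fun _ : ι => c) ∈ LinearMap.ker (toEuclideanLin M) := by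
    simpa [LinearMap.mem_ker] using (hker _).2 ⟨c, rfl⟩
  constructor
  · intro hx
    simpa [hinner] using Submodule.inner_right_of_mem_orthogonal (hmem 1) hx
  · intro hx u hu
    obtain ⟨c, hc⟩ := (hker u.ofLp).1 (congrArg WithLp.ofLp hu)
    rw [← WithLp.toLp_ofLp (p := 2) u, hc, hinner, hx, mul_zero]

theorem PosSemidef.exists_pos_eigenvector_sum_eq_zero (hM : M.PosSemidef)
    (hker : ∀ v : ι → ℝ, M *ᵥ v = 0 ↔ ∃ c : ℝ, v = fun _ => c) (hM0 : M ≠ 0) :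
    ∃ μ > 0, (∃ v : ι → ℝ, v ≠ 0 ∧ ∑ i, v i = 0 ∧ M *ᵥ v = μ • v) ∧
      ∀ δ : ι → ℝ, ∑ i, δ i = 0 → μ * ∑ i, δ i ^ 2 ≤ δ ⬝ᵥ M *ᵥ δ := by
  have hT : (toEuclideanLin M).IsPositive := isPositive_toEuclideanLin_iff.2 hM
  have hT0 : toEuclideanLin M ≠ 0 := (LinearEquiv.map_ne_zero_iff _).2 hM0
  obtain ⟨μ, hμ, ⟨v, hvW, hv0, hMv⟩, hgap⟩ := hT.exists_pos_eigenvector_orthogonal_ker hT0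
  refine ⟨μ, hμ, ⟨v.ofLp, by simpa using hv0,
    (mem_orthogonal_ker_toEuclideanLin_iff_sum_eq_zero hker v).1 hvW, congrArg WithLp.ofLp hMv⟩,
    fun δ hδ => ?_⟩
  have := hgap (WithLp.toLp 2 δ) ((mem_orthogonal_ker_toEuclideanLin_iff_sum_eq_zero hker _).2 hδ)
  simpa [EuclideanSpace.real_norm_sq_eq, EuclideanSpace.inner_eq_star_dotProduct,
    dotProduct_comm] using this

end SpectralGap

section StateDecomposition

variable {n : Type*} [DecidableEq n]

/-- For the Laplacian `A` of a graph, this is the Laplacian of that graph with a pendant vertex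
attached to every vertex. -/
def stateDecompositionLaplacian (A : Matrix n n ℝ) : Matrix (n ⊕ n) (n ⊕ n) ℝ :=
  fromBlocks (A + 1) (-1) (-1) 1

theorem stateDecompositionLaplacian_ne_zero [Nonempty n] (A : Matrix n n ℝ) :
    A.stateDecompositionLaplacian ≠ 0 := by
  obtain ⟨i⟩ := ‹Nonempty n›
  intro h
  simpa [stateDecompositionLaplacian] using congrFun (congrFun h (Sum.inr i)) (Sum.inr i)

variable {A : Matrix n n ℝ}

theorem IsSymm.stateDecompositionLaplacian (hA : A.IsSymm) :
    A.stateDecompositionLaplacian.IsSymm :=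
  IsSymm.fromBlocks (hA.add isSymm_one) (by simp) isSymm_one

variable [Fintype n]

theorem stateDecompositionLaplacian_mulVec_sumElim (A : Matrix n n ℝ) (x y : n → ℝ) :
    A.stateDecompositionLaplacian *ᵥ Sum.elim x y = Sum.elim (A *ᵥ x + (x - y)) (y - x) := by
  rw [stateDecompositionLaplacian, fromBlocks_mulVec]
  simp only [Sum.elim_comp_inl, Sum.elim_comp_inr, add_mulVec, neg_mulVec, one_mulVec]
  congr 1 <;> abel

theorem sumElim_dotProduct_stateDecompositionLaplacian_mulVec (A : Matrix n n ℝ)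
    (x y : n → ℝ) :
    Sum.elim x y ⬝ᵥ A.stateDecompositionLaplacian *ᵥ Sum.elim x y =
      x ⬝ᵥ A *ᵥ x + (x - y) ⬝ᵥ (x - y) := by
  rw [stateDecompositionLaplacian_mulVec_sumElim, sumElim_dotProduct_sumElim]
  simp only [dotProduct_add, dotProduct_sub, sub_dotProduct, dotProduct_comm y x]
  ring

theorem PosSemidef.stateDecompositionLaplacian (hA : A.PosSemidef) :
    A.stateDecompositionLaplacian.PosSemidef := by
  have hsymm := (isHermitian_iff_isSymm.1 hA.isHermitian).stateDecompositionLaplacian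
  refine .of_dotProduct_mulVec_nonneg (isHermitian_iff_isSymm.2 hsymm) fun v => ?_
  rw [star_trivial, ← Sum.elim_comp_inl_inr v,
    sumElim_dotProduct_stateDecompositionLaplacian_mulVec]
  have hAv := hA.dotProduct_mulVec_nonneg (v ∘ Sum.inl)
  rw [star_trivial] at hAv
  have := dotProduct_self_star_nonneg (v ∘ Sum.inl - v ∘ Sum.inr)
  positivity

theorem stateDecompositionLaplacian_mulVec_sumElim_eq_zero_iff (x y : n → ℝ) :
    A.stateDecompositionLaplacian *ᵥ Sum.elim x y = 0 ↔ x = y ∧ A *ᵥ x = 0 := by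
  rw [stateDecompositionLaplacian_mulVec_sumElim]
  constructor
  · intro h
    have hxy : x = y := (sub_eq_zero.1 (by simpa using congrArg (· ∘ Sum.inr) h)).symm
    exact ⟨hxy, by simpa [hxy] using congrArg (· ∘ Sum.inl) h⟩
  · rintro ⟨rfl, h⟩
    simp [h]

theorem stateDecompositionLaplacian_mulVec_eq_zero_iff
    (hA : ∀ x : n → ℝ, A *ᵥ x = 0 ↔ ∃ c : ℝ, x = fun _ => c) (v : n ⊕ n → ℝ) :
    A.stateDecompositionLaplacian *ᵥ v = 0 ↔ ∃ c : ℝ, v = fun _ => c := by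
  rw [← Sum.elim_comp_inl_inr v, stateDecompositionLaplacian_mulVec_sumElim_eq_zero_iff]
  constructor
  · rintro ⟨hxy, hx⟩
    obtain ⟨c, hc⟩ := (hA _).1 hx
    refine ⟨c, funext fun k => ?_⟩
    cases k with
    | inl i => exact congrFun hc i
    | inr i => exact (congrFun hxy i).symm.trans (congrFun hc i)
  · rintro ⟨c, hc⟩
    have hx : v ∘ Sum.inl = fun _ => c := funext fun i => congrFun hc (Sum.inl i)
    have hy : v ∘ Sum.inr = fun _ => c := funext fun i => congrFun hc (Sum.inr i)
    exact ⟨hx.trans hy.symm, (hA _).2 ⟨c, hx⟩⟩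

end StateDecomposition

end Matrix

theorem SimpleGraph.Connected.lapMatrix_mulVec_eq_zero_iff {V : Type*} [Fintype V]
    [DecidableEq V] {G : SimpleGraph V} [DecidableRel G.Adj] (hG : G.Connected) (x : V → ℝ) :
    G.lapMatrix ℝ *ᵥ x = 0 ↔ ∃ c : ℝ, x = fun _ => c := by
  rw [lapMatrix_mulVec_eq_zero_iff_forall_reachable]
  refine ⟨fun h => ?_, fun ⟨c, hc⟩ _ _ _ => by simp [hc]⟩
  obtain ⟨v⟩ := hG.nonempty
  exact ⟨x v, funext fun u => h u v (hG.preconnected u v)⟩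

/-- for the Laplacian `L` of an undirected connected graph on `N` vertices, the
block matrix `L' = [[L + I, −I], [−I, I]]` is symmetric, positive semidefinite, satisfies
`L' 1 = 0`, its kernel is exactly the span of the all-ones vector, and its second smallest
eigenvalue is strictly positive (it is a positive eigenvalue `λ₂'` attained on the orthogonal
complement of the all-ones vector, with `δᵀ L' δ ≥ λ₂' ‖δ‖²` there). -/
theorem statement7
    (N : ℕ) (G : SimpleGraph (Fin N)) [DecidableRel G.Adj] (hG : G.Connected)
    (L' : Matrix (Fin N ⊕ Fin N) (Fin N ⊕ Fin N) ℝ)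
    (hL' : L' = Matrix.fromBlocks (G.lapMatrix ℝ + 1) (-1) (-1) (1 : Matrix (Fin N) (Fin N) ℝ)) :
    L'.IsSymm ∧
    L'.PosSemidef ∧
    L'.mulVec (fun _ => (1 : ℝ)) = 0 ∧
    (∀ v : Fin N ⊕ Fin N → ℝ, L'.mulVec v = 0 ↔ ∃ c : ℝ, v = fun _ => c) ∧
    (∃ lam2' > (0 : ℝ),
      (∃ v : Fin N ⊕ Fin N → ℝ, v ≠ 0 ∧ (∑ k, v k) = 0 ∧ L'.mulVec v = lam2' • v) ∧
      ∀ δ : Fin N ⊕ Fin N → ℝ, (∑ k, δ k) = 0 →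
        lam2' * (∑ k, δ k ^ 2) ≤ δ ⬝ᵥ L'.mulVec δ) := by
  obtain rfl : L' = (G.lapMatrix ℝ).stateDecompositionLaplacian := hL'
  have : Nonempty (Fin N) := hG.nonempty
  have hker := stateDecompositionLaplacian_mulVec_eq_zero_iff hG.lapMatrix_mulVec_eq_zero_iff
  have hpsd := (SimpleGraph.posSemidef_lapMatrix ℝ G).stateDecompositionLaplacian
  exact ⟨(G.isSymm_lapMatrix ℝ).stateDecompositionLaplacian, hpsd, (hker _).2 ⟨1, rfl⟩, hker,
    hpsd.exists_pos_eigenvector_sum_eq_zero hker (stateDecompositionLaplacian_ne_zero _)⟩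
end
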